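/- arXiv:1507.01453 — 2 statements merged into one kernel-verified Lean document; each statement's English description precedes it below -/
import Mathlib

section
/- Let L be a Lie algebra over ℚ, X, Y ∈ L, and suppose every iterated bracket of length 5 in X and Y vanishes. Then BCH(X,Y) = X + Y + (1/2)[X,Y] + (1/12)[[X,Y],Y−X] + (1/96)([X+Y,[[X,Y],X+Y]] + [[[X,Y],X−Y],X−Y]). Equivalently, the degree-4 part (−1/24)[Y,[X,[X,Y]]] of the standard BCH series equals (1/96)([X+Y,[[X,Y],X+Y]] + [[[X,Y],X−Y],X−Y]). -/
/-!
The cubic terms agree by antisymmetry. For the quartic ones, polarization gives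
`ad(x+y)² z − ad(x−y)² z = 2 (ad x ad y + ad y ad x) z`, and on `z = ⁅x, y⁆` the operators
`ad x ad y` and `ad y ad x` agree, so the symmetric quartic term is `−4 ⁅y, ⁅x, ⁅x, y⁆⁆⁆`.
-/

section LieRing

variable {L : Type*} [LieRing L] (x y z : L)

/-- The Leibniz rule turns the difference of the two sides into `⁅⁅x, y⁆, ⁅x, y⁆⁆ = 0`. -/
theorem lie_lie_lie_lie_swap : ⁅x, ⁅y, ⁅x, y⁆⁆⁆ = ⁅y, ⁅x, ⁅x, y⁆⁆⁆ := by
  simpa using leibniz_lie x y ⁅x, y⁆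

theorem lie_lie_sub_eq_add : ⁅⁅x, y⁆, y - x⁆ = ⁅x, ⁅x, y⁆⁆ + ⁅y, ⁅y, x⁆⁆ := by
  rw [lie_sub, ← lie_skew ⁅x, y⁆ y, ← lie_skew ⁅x, y⁆ x, ← lie_skew x y, lie_neg]
  abel

theorem lie_add_lie_lie_add_add_lie_lie_sub_sub :
    ⁅x + y, ⁅z, x + y⁆⁆ + ⁅⁅z, x - y⁆, x - y⁆ = (-2 : ℤ) • (⁅x, ⁅y, z⁆⁆ + ⁅y, ⁅x, z⁆⁆) := by
  rw [← lie_skew z (x + y), ← lie_skew ⁅z, x - y⁆ (x - y), ← lie_skew z (x - y)]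
  simp only [lie_add, lie_sub, add_lie, sub_lie, lie_neg, neg_neg]
  module

theorem bch_symmetric_quartic_eq :
    ⁅x + y, ⁅⁅x, y⁆, x + y⁆⁆ + ⁅⁅⁅x, y⁆, x - y⁆, x - y⁆ = (-4 : ℤ) • ⁅y, ⁅x, ⁅x, y⁆⁆⁆ := by
  rw [lie_add_lie_lie_add_add_lie_lie_sub_sub, lie_lie_lie_lie_swap]
  module

end LieRing

theorem bch_deg_four_general {L : Type*} [LieRing L] [LieAlgebra ℚ L] (X Y : L) :
    (X + Y + (1/2 : ℚ) • ⁅X, Y⁆ + (1/12 : ℚ) • ⁅X, ⁅X, Y⁆⁆ + (1/12 : ℚ) • ⁅Y, ⁅Y, X⁆⁆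
        - (1/24 : ℚ) • ⁅Y, ⁅X, ⁅X, Y⁆⁆⁆ =
      X + Y + (1/2 : ℚ) • ⁅X, Y⁆ + (1/12 : ℚ) • ⁅⁅X, Y⁆, Y - X⁆
        + (1/96 : ℚ) • (⁅X + Y, ⁅⁅X, Y⁆, X + Y⁆⁆ + ⁅⁅⁅X, Y⁆, X - Y⁆, X - Y⁆))
    ∧ (-(1/24 : ℚ)) • ⁅Y, ⁅X, ⁅X, Y⁆⁆⁆ =
      (1/96 : ℚ) • (⁅X + Y, ⁅⁅X, Y⁆, X + Y⁆⁆ + ⁅⁅⁅X, Y⁆, X - Y⁆, X - Y⁆) := by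
  have quartic : (-(1/24 : ℚ)) • ⁅Y, ⁅X, ⁅X, Y⁆⁆⁆ =
      (1/96 : ℚ) • (⁅X + Y, ⁅⁅X, Y⁆, X + Y⁆⁆ + ⁅⁅⁅X, Y⁆, X - Y⁆, X - Y⁆) := by
    rw [bch_symmetric_quartic_eq]
    module
  refine ⟨?_, quartic⟩
  rw [← quartic, lie_lie_sub_eq_add]
  module

/-- If every iterated bracket of length 5 in `X` and `Y` vanishes, then the BCH series
(terminating at degree 4, with standard value
`X + Y + ½[X,Y] + 1/12[X,[X,Y]] + 1/12[Y,[Y,X]] − 1/24[Y,[X,[X,Y]]]`) equals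
`X + Y + ½[X,Y] + 1/12[[X,Y],Y−X] + 1/96([X+Y,[[X,Y],X+Y]] + [[[X,Y],X−Y],X−Y])`;
equivalently the degree-4 parts agree. -/
theorem bch_deg_four {L : Type*} [LieRing L] [LieAlgebra ℚ L] (X Y : L)
    (h : ∀ a b c d e : L, a ∈ ({X, Y} : Set L) → b ∈ ({X, Y} : Set L) →
      c ∈ ({X, Y} : Set L) → d ∈ ({X, Y} : Set L) → e ∈ ({X, Y} : Set L) →
      ⁅a, ⁅b, ⁅c, ⁅d, e⁆⁆⁆⁆ = 0) :
    (X + Y + (1/2 : ℚ) • ⁅X, Y⁆ + (1/12 : ℚ) • ⁅X, ⁅X, Y⁆⁆ + (1/12 : ℚ) • ⁅Y, ⁅Y, X⁆⁆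
        - (1/24 : ℚ) • ⁅Y, ⁅X, ⁅X, Y⁆⁆⁆ =
      X + Y + (1/2 : ℚ) • ⁅X, Y⁆ + (1/12 : ℚ) • ⁅⁅X, Y⁆, Y - X⁆
        + (1/96 : ℚ) • (⁅X + Y, ⁅⁅X, Y⁆, X + Y⁆⁆ + ⁅⁅⁅X, Y⁆, X - Y⁆, X - Y⁆))
    ∧ (-(1/24 : ℚ)) • ⁅Y, ⁅X, ⁅X, Y⁆⁆⁆ =
      (1/96 : ℚ) • (⁅X + Y, ⁅⁅X, Y⁆, X + Y⁆⁆ + ⁅⁅⁅X, Y⁆, X - Y⁆, X - Y⁆) :=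
  bch_deg_four_general X Y
end

section
/- Let A be an associative ℚ-algebra, X ∈ A with (ad X)^(n+1) = 0 and X nilpotent so that exp is polynomial. Then for all Y ∈ A and t in a commutative ℚ-algebra with t² = 0, exp(X + tY) = exp(X)·exp(t·Σ_{p=0}^{n} ((−1)^p/(p+1)!)(ad X)^p(Y)) = exp(X)·(1 + t·Σ_{p=0}^{n} ((−1)^p/(p+1)!)(ad X)^p(Y)). -/
open scoped TensorProduct

attribute [local instance 100] LieRing.ofAssociativeRing

/-- Exponential of an element of a `ℚ`-algebra, as a finite sum (`finsum`);
it is genuinely the exponential when the element is nilpotent. -/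
noncomputable def expQ {A : Type*} [Ring A] [Algebra ℚ A] (a : A) : A :=
  ∑ᶠ k : ℕ, (k.factorial : ℚ)⁻¹ • a ^ k

/-!
Let `ε` be central with `ε² = 0` and work with polynomials in a variable `s`. The polynomials
`E = e^{sx}` and `W = e^{s(x + εy)}` are the solutions of `f' = x f` and `f' = (x + εy) f` with
`f(0) = 1`, and such linear equations have unique solutions, since they determine the
coefficients recursively (dividing by `k + 1` in a `ℚ`-algebra). The polynomial
`R = e^{-s ad x} y` satisfies `R' = R x - x R`, so `E R` and `y E` solve the same equation, giving
Hadamard's lemma `E R = y E`. If `Q' = R` and `Q(0) = 0`, then `G = E (1 + ε Q)` satisfies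
`G' = x G + ε y E = (x + ε y) G` because `ε² = 0`; hence `W = G`, and `s = 1` gives
`exp (x + ε y) = exp x (1 + ε Q(1))` with `Q(1) = Σ (-1)^p / (p+1)! (ad x)^p y`.
-/

open Finset
open scoped Nat Polynomial

section SquareZero
variable {B : Type*} [Ring B] {ε : B}

lemma mul_mul_mul_eq_zero_of_sq_eq_zero (hε : ∀ b, Commute ε b) (hε2 : ε * ε = 0) (a b : B) :
    ε * a * (ε * b) = 0 := by
  rw [(hε a).eq, mul_assoc, ← mul_assoc ε, hε2, zero_mul, mul_zero]

lemma exists_add_mul_pow_eq (hε : ∀ b, Commute ε b) (x y : B) (k : ℕ) :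
    ∃ c, (x + ε * y) ^ k = x ^ k + ε * c := by
  induction k with
  | zero => exact ⟨0, by simp⟩
  | succ k ih =>
    obtain ⟨c, hc⟩ := ih
    refine ⟨c * (x + ε * y) + x ^ k * y, ?_⟩
    rw [pow_succ, hc, pow_succ, add_mul, mul_add, (hε _).symm.left_comm]
    noncomm_ring

lemma IsNilpotent.add_mul_of_sq_eq_zero {x : B} (hx : IsNilpotent x) (hε : ∀ b, Commute ε b)
    (hε2 : ε * ε = 0) (y : B) : IsNilpotent (x + ε * y) := by
  obtain ⟨m, hm⟩ := hx
  obtain ⟨c, hc⟩ := exists_add_mul_pow_eq hε x y m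
  refine ⟨m + m, ?_⟩
  rw [pow_add, hc, hm, zero_add, mul_mul_mul_eq_zero_of_sq_eq_zero hε hε2]

end SquareZero

lemma inv_factorial_succ_smul_mul_succ {B : Type*} [Ring B] [Algebra ℚ B] (u : B) (k : ℕ) :
    ((k + 1)! : ℚ)⁻¹ • u * ((k : B) + 1) = (k ! : ℚ)⁻¹ • u := by
  rw [smul_mul_assoc, ← Nat.cast_succ, ← nsmul_eq_mul', ← Nat.cast_smul_eq_nsmul ℚ, smul_smul]
  congr 1
  push_cast [Nat.factorial_succ]
  field_simp

namespace Polynomial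

section Ring
variable {B : Type*} [Ring B]

lemma eval_one_mul (p q : B[X]) : (p * q).eval 1 = p.eval 1 * q.eval 1 :=
  eval₂_mul_noncomm _ _ fun _ => Commute.one_right _

lemma commute_C_of_forall_commute {a : B} (ha : ∀ b, Commute a b) (p : B[X]) :
    Commute (C a) p := by
  ext k
  simp only [coeff_C_mul, coeff_mul_C, (ha _).eq]

end Ring

variable {B : Type*} [Ring B] [Algebra ℚ B]

lemma eq_zero_of_derivative_eq {f : B[X]} {a b : B} (hf : derivative f = C a * f + f * C b)
    (h0 : f.coeff 0 = 0) : f = 0 := by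
  ext k
  rw [coeff_zero]
  induction k with
  | zero => exact h0
  | succ k ih =>
    have hk := congr_arg (coeff · k) hf
    simp only [coeff_derivative, coeff_add, coeff_C_mul, coeff_mul_C, ih, mul_zero, zero_mul,
      add_zero] at hk
    rwa [← Nat.cast_succ, ← nsmul_eq_mul', ← Nat.cast_smul_eq_nsmul ℚ, smul_eq_zero,
      or_iff_right (by positivity)] at hk

lemma eq_of_derivative_eq {f g : B[X]} {a b : B} (hf : derivative f = C a * f + f * C b)
    (hg : derivative g = C a * g + g * C b) (h0 : f.coeff 0 = g.coeff 0) : f = g := by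
  rw [← sub_eq_zero]
  refine eq_zero_of_derivative_eq (a := a) (b := b) ?_ (by rw [coeff_sub, h0, sub_self])
  rw [derivative_sub, hf, hg]
  noncomm_ring

noncomputable def truncEGF (u : ℕ → B) (N : ℕ) : B[X] :=
  ∑ k ∈ range N, monomial k ((k ! : ℚ)⁻¹ • u k)

lemma derivative_truncEGF (u : ℕ → B) (N : ℕ) :
    derivative (truncEGF u (N + 1)) = truncEGF (fun k => u (k + 1)) N := by
  rw [truncEGF, sum_range_succ', derivative_add, derivative_sum, derivative_monomial, Nat.cast_zero,
    mul_zero, map_zero, add_zero]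
  simp only [derivative_monomial_succ, inv_factorial_succ_smul_mul_succ, truncEGF]

lemma truncEGF_succ_of_eq_zero {u : ℕ → B} {N : ℕ} (h : u N = 0) :
    truncEGF u (N + 1) = truncEGF u N := by
  simp [truncEGF, sum_range_succ, h]

lemma coeff_truncEGF_zero (u : ℕ → B) (N : ℕ) : (truncEGF u (N + 1)).coeff 0 = u 0 := by
  simp [truncEGF, coeff_monomial]

lemma C_mul_truncEGF (a : B) (u : ℕ → B) (N : ℕ) :
    C a * truncEGF u N = truncEGF (fun k => a * u k) N := by
  simp only [truncEGF, mul_sum, C_mul_monomial, mul_smul_comm]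

lemma truncEGF_mul_C (a : B) (u : ℕ → B) (N : ℕ) :
    truncEGF u N * C a = truncEGF (fun k => u k * a) N := by
  simp only [truncEGF, sum_mul, monomial_mul_C, smul_mul_assoc]

lemma truncEGF_sub (u v : ℕ → B) (N : ℕ) :
    truncEGF u N - truncEGF v N = truncEGF (fun k => u k - v k) N := by
  simp only [truncEGF, ← sum_sub_distrib, ← map_sub, smul_sub]

lemma eval_one_truncEGF (u : ℕ → B) (N : ℕ) :
    (truncEGF u N).eval 1 = ∑ k ∈ range N, (k ! : ℚ)⁻¹ • u k := by
  simp [truncEGF, eval_finsetSum]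

lemma derivative_truncEGF_pow {a : B} {N : ℕ} (h : a ^ N = 0) :
    derivative (truncEGF (a ^ ·) (N + 1)) = C a * truncEGF (a ^ ·) (N + 1) := by
  rw [derivative_truncEGF, truncEGF_succ_of_eq_zero (u := (a ^ ·)) h, C_mul_truncEGF]
  simp only [pow_succ']

lemma eval_one_truncEGF_pow {a : B} {N : ℕ} (h : a ^ N = 0) :
    (truncEGF (a ^ ·) (N + 1)).eval 1 = IsNilpotent.exp a := by
  rw [eval_one_truncEGF, IsNilpotent.exp_eq_sum (pow_eq_zero_of_le N.le_succ h)]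

lemma commute_C_truncEGF_pow {a b : B} (h : Commute b a) (N : ℕ) :
    Commute (C b) (truncEGF (a ^ ·) N) := by
  rw [Commute, SemiconjBy, C_mul_truncEGF, truncEGF_mul_C]
  simp only [(h.pow_right _).eq]

end Polynomial

section Adjoint
variable {B : Type*} [Ring B] [Algebra ℚ B]
open LieAlgebra

lemma LieAlgebra.map_ad_pow_apply {A : Type*} [Ring A] [Algebra ℚ A] (f : A →+* B) (x y : A)
    (p : ℕ) : f ((ad ℚ A x ^ p) y) = (ad ℚ B (f x) ^ p) (f y) := by
  induction p with
  | zero => rfl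
  | succ p ih =>
    rw [pow_succ', Module.End.mul_apply, ad_apply, Ring.lie_def, map_sub, map_mul, map_mul, ih,
      pow_succ', Module.End.mul_apply, ad_apply, Ring.lie_def]

lemma neg_ad_pow_succ_apply (x y : B) (p : ℕ) :
    ((-ad ℚ B x) ^ (p + 1)) y = ((-ad ℚ B x) ^ p) y * x - x * ((-ad ℚ B x) ^ p) y := by
  rw [pow_succ', Module.End.mul_apply, LinearMap.neg_apply, ad_apply, Ring.lie_def, neg_sub]

lemma neg_ad_pow_apply (x y : B) (p : ℕ) :
    ((-ad ℚ B x) ^ p) y = ((-1 : ℚ) ^ p) • (ad ℚ B x ^ p) y := by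
  rw [← neg_one_smul ℚ (ad ℚ B x), smul_pow, LinearMap.smul_apply]

namespace Polynomial

noncomputable def expNegAdPoly (x y : B) (n : ℕ) : B[X] :=
  truncEGF (fun p => ((-ad ℚ B x) ^ p) y) (n + 1)

noncomputable def integralExpNegAdPoly (x y : B) (n : ℕ) : B[X] :=
  truncEGF (fun k => if k = 0 then 0 else ((-ad ℚ B x) ^ (k - 1)) y) (n + 2)

variable {x y : B} {n : ℕ}

lemma derivative_integralExpNegAdPoly :
    derivative (integralExpNegAdPoly x y n) = expNegAdPoly x y n := by
  simp [integralExpNegAdPoly, derivative_truncEGF, expNegAdPoly]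

lemma coeff_integralExpNegAdPoly_zero : (integralExpNegAdPoly x y n).coeff 0 = 0 := by
  simp [integralExpNegAdPoly, coeff_truncEGF_zero]

lemma eval_one_integralExpNegAdPoly :
    (integralExpNegAdPoly x y n).eval 1 =
      ∑ p ∈ range (n + 1), ((-1) ^ p / (p + 1)! : ℚ) • (ad ℚ B x ^ p) y := by
  simp [integralExpNegAdPoly, eval_one_truncEGF, sum_range_succ' _ (n + 1), neg_ad_pow_apply,
    div_eq_inv_mul, mul_smul]

lemma derivative_expNegAdPoly (hy : ((-ad ℚ B x) ^ (n + 1)) y = 0) :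
    derivative (expNegAdPoly x y n) = expNegAdPoly x y n * C x - C x * expNegAdPoly x y n := by
  rw [expNegAdPoly, derivative_truncEGF,
    ← truncEGF_succ_of_eq_zero (u := fun p => ((-ad ℚ B x) ^ (p + 1)) y) hy, truncEGF_mul_C,
    C_mul_truncEGF, truncEGF_sub]
  simp only [neg_ad_pow_succ_apply]

lemma truncEGF_pow_mul_expNegAdPoly {N : ℕ} (hx : x ^ N = 0)
    (hy : ((-ad ℚ B x) ^ (n + 1)) y = 0) :
    truncEGF (x ^ ·) (N + 1) * expNegAdPoly x y n = C y * truncEGF (x ^ ·) (N + 1) := by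
  have hE := derivative_truncEGF_pow hx
  have hxE := commute_C_truncEGF_pow (Commute.refl x) (N + 1)
  refine eq_of_derivative_eq (a := 0) (b := x) ?_ ?_ ?_
  · rw [derivative_mul, hE, derivative_expNegAdPoly hy, map_zero, zero_mul, zero_add, hxE.eq]
    noncomm_ring
  · rw [derivative_C_mul, hE, map_zero, zero_mul, zero_add, hxE.eq, mul_assoc]
  · simp [mul_coeff_zero, expNegAdPoly, coeff_truncEGF_zero]

lemma truncEGF_add_mul_pow_eq {ε : B} (hε : ∀ b, Commute ε b) (hε2 : ε * ε = 0) {M N : ℕ}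
    (hM : (x + ε * y) ^ M = 0) (hN : x ^ N = 0) (hy : ((-ad ℚ B x) ^ (n + 1)) y = 0) :
    truncEGF ((x + ε * y) ^ ·) (M + 1) =
      truncEGF (x ^ ·) (N + 1) * (1 + C ε * integralExpNegAdPoly x y n) := by
  set E := truncEGF (x ^ ·) (N + 1)
  set Q := integralExpNegAdPoly x y n
  have hCε := commute_C_of_forall_commute hε
  have hεε : C ε * C ε = 0 := by rw [← map_mul, hε2, map_zero]
  have hG : derivative (E * (1 + C ε * Q)) = C (x + ε * y) * (E * (1 + C ε * Q)) := by
    calc derivative (E * (1 + C ε * Q))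
        = C x * (E * (1 + C ε * Q)) + C ε * (E * expNegAdPoly x y n) := by
          rw [derivative_mul, derivative_truncEGF_pow hN, derivative_add, derivative_one, zero_add,
            derivative_C_mul, derivative_integralExpNegAdPoly, mul_assoc, ← mul_assoc E,
            ← (hCε E).eq, mul_assoc]
      _ = C x * (E * (1 + C ε * Q)) + C ε * (C y * E) := by
          rw [truncEGF_pow_mul_expNegAdPoly hN hy]
      _ = C (x + ε * y) * (E * (1 + C ε * Q)) := by
          have hεyEεQ : C ε * (C y * (E * (C ε * Q))) = 0 := by
            rw [← mul_assoc (C y), ← mul_assoc, mul_mul_mul_eq_zero_of_sq_eq_zero hCε hεε]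
          rw [map_add, map_mul, add_mul, mul_assoc (C ε), mul_add E, mul_one, mul_add (C y),
            mul_add (C ε), hεyEεQ, add_zero]
  refine eq_of_derivative_eq (a := x + ε * y) (b := 0) ?_
    (by rw [hG, map_zero, mul_zero, add_zero]) ?_
  · rw [derivative_truncEGF_pow hM, map_zero, mul_zero, add_zero]
  · rw [mul_coeff_zero, coeff_truncEGF_zero, coeff_truncEGF_zero, coeff_add, mul_coeff_zero,
      coeff_integralExpNegAdPoly_zero]
    simp

end Polynomial

open Polynomial in
theorem IsNilpotent.exp_add_mul_of_sq_eq_zero {x ε : B} (hx : IsNilpotent x)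
    (hε : ∀ b, Commute ε b) (hε2 : ε * ε = 0) (y : B) {n : ℕ} (hy : (ad ℚ B x ^ (n + 1)) y = 0) :
    exp (x + ε * y) =
      exp x * (1 + ε * ∑ p ∈ range (n + 1), ((-1) ^ p / (p + 1)! : ℚ) • (ad ℚ B x ^ p) y) := by
  have hy' : ((-ad ℚ B x) ^ (n + 1)) y = 0 := by rw [neg_ad_pow_apply, hy, smul_zero]
  obtain ⟨M, hM⟩ := hx.add_mul_of_sq_eq_zero hε hε2 y
  obtain ⟨N, hN⟩ := hx
  have h1 := congr_arg (eval 1) (truncEGF_add_mul_pow_eq hε hε2 hM hN hy')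
  rwa [eval_one_mul, eval_add, eval_one, eval_C_mul, eval_one_integralExpNegAdPoly,
    eval_one_truncEGF_pow hM, eval_one_truncEGF_pow hN] at h1

end Adjoint

lemma expQ_eq_exp {A : Type*} [Ring A] [Algebra ℚ A] {a : A} (ha : IsNilpotent a) :
    expQ a = IsNilpotent.exp a := by
  obtain ⟨N, hN⟩ := ha
  rw [IsNilpotent.exp_eq_sum hN]
  refine finsum_eq_sum_of_support_subset _ fun k hk => ?_
  by_contra hkN
  apply hk
  dsimp only
  rw [pow_eq_zero_of_le (by simpa using hkN) hN, smul_zero]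

lemma IsNilpotent.exp_eq_one_add_of_mul_self_eq_zero {A : Type*} [Ring A] [Module ℚ A] {a : A}
    (ha : a * a = 0) : IsNilpotent.exp a = 1 + a := by
  simp [IsNilpotent.exp_eq_sum (a := a) (k := 2) (by rw [sq, ha]), sum_range_succ]

lemma Algebra.TensorProduct.commute_one_tmul {R A S : Type*} [CommRing R] [Ring A] [Algebra R A]
    [CommRing S] [Algebra R S] (s : S) (b : A ⊗[R] S) : Commute ((1 : A) ⊗ₜ s) b := by
  induction b using TensorProduct.induction_on with
  | zero => exact Commute.zero_right _
  | tmul a s' => exact (Commute.one_left a).tmul (Commute.all s s')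
  | add b b' hb hb' => exact hb.add_right hb'

/-- The left logarithmic derivative of `exp`: for nilpotent `X` with
`(ad X)^(n+1) = 0` and square-zero `t` in a commutative `ℚ`-algebra `S`,
`exp(X + tY) = exp(X)·exp(t·Σ ((−1)^p/(p+1)!)(ad X)^p Y)
            = exp(X)·(1 + t·Σ ((−1)^p/(p+1)!)(ad X)^p Y)` in `A ⊗ S`. -/
theorem left_log_derivative {A S : Type*} [Ring A] [Algebra ℚ A] [CommRing S] [Algebra ℚ S]
    (X Y : A) (n : ℕ) (hX : IsNilpotent X) (had : (LieAlgebra.ad ℚ A X) ^ (n + 1) = 0)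
    (t : S) (ht : t ^ 2 = 0) :
    letI X' : A ⊗[ℚ] S := X ⊗ₜ 1
    letI t' : A ⊗[ℚ] S := (1 : A) ⊗ₜ t
    letI Z : A := ∑ p ∈ Finset.range (n + 1),
      (((-1) ^ p / (p + 1).factorial : ℚ)) • ((LieAlgebra.ad ℚ A X) ^ p) Y
    expQ (X' + t' * (Y ⊗ₜ 1)) = expQ X' * expQ (t' * (Z ⊗ₜ 1)) ∧
    expQ (X' + t' * (Y ⊗ₜ 1)) = expQ X' * (1 + t' * (Z ⊗ₜ 1)) := by
  set X' : A ⊗[ℚ] S := X ⊗ₜ 1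
  set t' : A ⊗[ℚ] S := (1 : A) ⊗ₜ t
  set Z : A := ∑ p ∈ Finset.range (n + 1),
    (((-1) ^ p / (p + 1).factorial : ℚ)) • ((LieAlgebra.ad ℚ A X) ^ p) Y
  have hε : ∀ b, Commute t' b := Algebra.TensorProduct.commute_one_tmul t
  have hε2 : t' * t' = 0 := by
    rw [Algebra.TensorProduct.tmul_mul_tmul, one_mul, ← sq, ht, TensorProduct.tmul_zero]
  let f : A →+* A ⊗[ℚ] S := (Algebra.TensorProduct.includeLeft : A →ₐ[ℚ] A ⊗[ℚ] S)
  have hX' : IsNilpotent X' := hX.map f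
  have hmap (p : ℕ) : (LieAlgebra.ad ℚ _ X' ^ p) (Y ⊗ₜ 1) = ((LieAlgebra.ad ℚ A X ^ p) Y) ⊗ₜ 1 :=
    (LieAlgebra.map_ad_pow_apply f X Y p).symm
  have hy : (LieAlgebra.ad ℚ _ X' ^ (n + 1)) (Y ⊗ₜ 1) = 0 := by
    rw [hmap, had, LinearMap.zero_apply, TensorProduct.zero_tmul]
  have hZ : ∑ p ∈ range (n + 1), ((-1) ^ p / (p + 1)! : ℚ) • (LieAlgebra.ad ℚ _ X' ^ p) (Y ⊗ₜ 1) =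
      Z ⊗ₜ 1 := by
    simp only [Z, TensorProduct.sum_tmul, hmap, TensorProduct.smul_tmul']
  have key := hX'.exp_add_mul_of_sq_eq_zero hε hε2 (Y ⊗ₜ 1) hy
  rw [hZ] at key
  rw [expQ_eq_exp (hX'.add_mul_of_sq_eq_zero hε hε2 _), expQ_eq_exp hX',
    expQ_eq_exp ⟨2, by rw [sq, mul_mul_mul_eq_zero_of_sq_eq_zero hε hε2]⟩,
    IsNilpotent.exp_eq_one_add_of_mul_self_eq_zero (mul_mul_mul_eq_zero_of_sq_eq_zero hε hε2 _ _)]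
  exact ⟨key, key⟩
end
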